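/- arXiv:1401.6271 — 4 statements merged into one kernel-verified Lean document; each statement's English description precedes it below -/
import Mathlib

section
/- For all n ≥ 0, E_n^{(k)}(x; a, b, c) = (ln a + ln b)^n · E_n^{(k)}((x ln c + ln a)/(ln a + ln b)), where E_n^{(k)}(y) denotes the poly-Euler polynomial with a=1, b=c=e. -/
/-!
Substituting `a^{-t} = e^{-t ln a}`, `b^t = e^{t ln b}`, `c^{xt} = e^{xt ln c}` turns the generating
function of `E_n^{(k)}(x;a,b,c)` at `t` into the ordinary poly-Euler generating function at
`(ln a + ln b) t` and `y = (x ln c + ln a)/(ln a + ln b)`. Both sides are power series in `t`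
converging near `0`, so their coefficients agree.
-/

/-- The polylogarithm `Li_k(z) = ∑_{m ≥ 1} z^m / m^k`. -/
noncomputable def polyLog (k : ℤ) (z : ℝ) : ℝ :=
  ∑' m : ℕ, z ^ (m + 1) / ((m : ℝ) + 1) ^ k

open Filter Topology FormalMultilinearSeries

section PowerSeries

variable {𝕜 : Type*} [NontriviallyNormedField 𝕜]

theorem le_radius_ofScalars_of_summable {c : ℕ → 𝕜} {t : 𝕜}
    (hs : Summable fun n => c n * t ^ n) : (‖t‖₊ : ENNReal) ≤ (ofScalars 𝕜 c).radius := by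
  refine le_radius_of_tendsto (l := 0) _ ?_
  simpa [ofScalars_norm, norm_mul, norm_pow] using hs.tendsto_atTop_zero.norm

theorem hasFPowerSeriesAt_ofScalars_of_eventually_hasSum {c : ℕ → 𝕜} {f : 𝕜 → 𝕜}
    (h : ∀ᶠ t in 𝓝 0, HasSum (fun n => c n * t ^ n) (f t)) :
    HasFPowerSeriesAt f (ofScalars 𝕜 c) 0 := by
  obtain ⟨r, hr, hsum⟩ := Metric.eventually_nhds_iff.mp h
  simp only [dist_zero_right] at hsum
  obtain ⟨t, ht0, htr⟩ := NormedField.exists_norm_lt 𝕜 hr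
  refine ⟨‖t‖₊, le_radius_ofScalars_of_summable (hsum htr).summable, by simpa using ht0,
    fun {y} hy => ?_⟩
  have hyt : ‖y‖ < ‖t‖ := by simpa [Metric.mem_eball, edist_zero_right] using hy
  simpa [ofScalars_apply_eq, mul_comm] using hsum (hyt.trans htr)

theorem ofScalars_eq_of_eventually_hasSum {c d : ℕ → 𝕜} {f : 𝕜 → 𝕜}
    (hc : ∀ᶠ t in 𝓝 0, HasSum (fun n => c n * t ^ n) (f t))
    (hd : ∀ᶠ t in 𝓝 0, HasSum (fun n => d n * t ^ n) (f t)) : c = d :=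
  ofScalars_series_injective 𝕜 𝕜 <|
    (hasFPowerSeriesAt_ofScalars_of_eventually_hasSum hc).eq_formalMultilinearSeries
      (hasFPowerSeriesAt_ofScalars_of_eventually_hasSum hd)

end PowerSeries

open Real

theorem generating_function_rpow_eq_exp {a b c : ℝ} (ha : 0 < a) (hb : 0 < b) (hc : 0 < c)
    (F : ℝ → ℝ) (x t : ℝ) :
    2 * F (1 - (a * b) ^ (-t)) / (a ^ (-t) + b ^ t) * c ^ (x * t) =
      2 * F (1 - exp (-((log a + log b) * t))) * exp ((x * log c + log a) * t) /
        (1 + exp ((log a + log b) * t)) := by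
  simp only [rpow_def_of_pos (mul_pos ha hb), rpow_def_of_pos ha, rpow_def_of_pos hb,
    rpow_def_of_pos hc, log_mul ha.ne' hb.ne', mul_neg]
  have hnum : exp ((x * log c + log a) * t) = exp (log c * (x * t)) * exp (log a * t) := by
    rw [← exp_add]; ring_nf
  have hden : exp ((log a + log b) * t) = exp (log a * t) * exp (log b * t) := by
    rw [← exp_add]; ring_nf
  rw [hnum, hden, exp_neg (log a * t)]
  field_simp

/-- Theorem 2: `E_n^{(k)}(x;a,b,c) = (ln a + ln b)^n E_n^{(k)}((x ln c + ln a)/(ln a + ln b))`. -/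
theorem generalized_polyEuler_reduction
    (a b c : ℝ) (ha : 0 < a) (hb : 0 < b) (hab : a * b ≠ 1) (hc : 0 < c) (k : ℤ)
    (E : ℕ → ℝ → ℝ) (Eo : ℕ → ℝ → ℝ) (ε : ℝ) (hε : 0 < ε)
    (hE : ∀ x t : ℝ, |t| < ε →
      HasSum (fun n : ℕ => E n x * t ^ n / (n.factorial : ℝ))
        (2 * polyLog k (1 - (a * b) ^ (-t)) / (a ^ (-t) + b ^ t) * c ^ (x * t)))
    (hEo : ∀ x t : ℝ, |t| < ε →
      HasSum (fun n : ℕ => Eo n x * t ^ n / (n.factorial : ℝ))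
        (2 * polyLog k (1 - Real.exp (-t)) * Real.exp (x * t) / (1 + Real.exp t)))
    (n : ℕ) (x : ℝ) :
    E n x = (Real.log a + Real.log b) ^ n *
      Eo n ((x * Real.log c + Real.log a) / (Real.log a + Real.log b)) := by
  have hL : log a + log b ≠ 0 := by
    rw [← log_mul ha.ne' hb.ne']
    exact log_ne_zero_of_pos_of_ne_one (mul_pos ha hb) hab
  set L := log a + log b
  set y := (x * log c + log a) / L
  have hsmall : ∀ᶠ t : ℝ in 𝓝 0, |t| < ε :=
    (continuous_abs.tendsto' 0 0 abs_zero).eventually (gt_mem_nhds hε)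
  have hsmall' : ∀ᶠ t : ℝ in 𝓝 0, |L * t| < ε :=
    ((continuous_const_mul L).tendsto' 0 0 (mul_zero L)).eventually hsmall
  set G := fun t => 2 * polyLog k (1 - (a * b) ^ (-t)) / (a ^ (-t) + b ^ t) * c ^ (x * t)
  have hsumE : ∀ t, |t| < ε → HasSum (fun n => E n x / n.factorial * t ^ n) (G t) :=
    fun t ht => by convert hE x t ht using 2 with n; ring
  have hsumEo : ∀ t, |L * t| < ε → HasSum (fun n => L ^ n * Eo n y / n.factorial * t ^ n) (G t) := by
    intro t ht
    have hy : y * (L * t) = (x * log c + log a) * t := by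
      rw [← mul_assoc, div_mul_cancel₀ _ hL]
    simp only [G, generating_function_rpow_eq_exp ha hb hc, ← hy]
    convert hEo y (L * t) ht using 2 with m
    rw [mul_pow]
    ring
  have hcoeff := ofScalars_eq_of_eventually_hasSum (hsmall.mono hsumE) (hsmall'.mono hsumEo)
  have hfac : (n.factorial : ℝ) ≠ 0 := by positivity
  simpa [hfac] using congrFun hcoeff n
end

section
/- For all n ≥ 0, the derivative with respect to x satisfies d/dx E_{n+1}^{(k)}(x; a, b, c) = (n+1)(ln c) · E_n^{(k)}(x; a, b, c). -/
/-! Writing `c ^ (x t) = exp (ℓ x t)` with `ℓ = log c`, the generating function is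
`G(t) exp (ℓ x t)`. Multiplying the series at `x` by the exponential series of `exp (ℓ h t)` and
comparing coefficients with the series at `x + h` gives the addition formula
`E_N(x + h) / N! = ∑_{i + j = N} E_i(x) / i! * (ℓ h)^j / j!`.
Hence `E_{n+1}` is a polynomial in `y - x` whose linear coefficient is `(n + 1) ℓ E_n(x)`. -/

open FormalMultilinearSeries Finset

section PowerSeries

variable {𝕜 : Type*} [RCLike 𝕜] {u v : ℕ → 𝕜} {f : 𝕜 → 𝕜} {ε : ℝ}

theorem le_radius_ofScalars_of_summable_s2
    (h : ∀ t : 𝕜, ‖t‖ < ε → Summable fun m => u m * t ^ m) :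
    ENNReal.ofReal ε ≤ (ofScalars 𝕜 u).radius := by
  refine ENNReal.le_of_forall_nnreal_lt fun r hr =>
    (ofScalars 𝕜 u).le_radius_of_tendsto (l := 0) ?_
  have hrε : ‖((r : ℝ) : 𝕜)‖ < ε := by
    rw [RCLike.norm_ofReal, NNReal.abs_eq]
    exact (ENNReal.ofReal_lt_ofReal_iff_of_nonneg r.2).1 (by simpa using hr)
  simpa [ofScalars_norm] using (h _ hrε).tendsto_atTop_zero.norm

theorem summable_norm_mul_pow_of_summable
    (h : ∀ t : 𝕜, ‖t‖ < ε → Summable fun m => u m * t ^ m) {t : 𝕜} (ht : ‖t‖ < ε) :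
    Summable fun m => ‖u m * t ^ m‖ := by
  have hmem : t ∈ Metric.eball (0 : 𝕜) (ofScalars 𝕜 u).radius := by
    refine lt_of_lt_of_le ?_ (le_radius_ofScalars_of_summable_s2 h)
    rw [edist_zero_right, ← ofReal_norm]
    exact (ENNReal.ofReal_lt_ofReal_iff_of_nonneg (norm_nonneg t)).2 ht
  simpa only [ofScalars_apply_eq, smul_eq_mul] using (ofScalars 𝕜 u).summable_norm_apply hmem

theorem hasFPowerSeriesOnBall_ofScalars_of_hasSum (hε : 0 < ε)
    (h : ∀ t : 𝕜, ‖t‖ < ε → HasSum (fun m => u m * t ^ m) (f t)) :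
    HasFPowerSeriesOnBall f (ofScalars 𝕜 u) 0 (ENNReal.ofReal ε) where
  r_le := le_radius_ofScalars_of_summable_s2 fun t ht => (h t ht).summable
  r_pos := ENNReal.ofReal_pos.2 hε
  hasSum {t} ht := by
    rw [Metric.mem_eball, edist_zero_right, ← ofReal_norm,
      ENNReal.ofReal_lt_ofReal_iff_of_nonneg (norm_nonneg t)] at ht
    simpa only [ofScalars_apply_eq, smul_eq_mul, zero_add] using h t ht

theorem eq_of_hasSum_mul_pow (hε : 0 < ε)
    (hu : ∀ t : 𝕜, ‖t‖ < ε → HasSum (fun m => u m * t ^ m) (f t))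
    (hv : ∀ t : 𝕜, ‖t‖ < ε → HasSum (fun m => v m * t ^ m) (f t)) : u = v :=
  ofScalars_series_injective 𝕜 𝕜 <|
    (hasFPowerSeriesOnBall_ofScalars_of_hasSum hε hu).hasFPowerSeriesAt.eq_formalMultilinearSeries
      (hasFPowerSeriesOnBall_ofScalars_of_hasSum hε hv).hasFPowerSeriesAt

end PowerSeries

theorem HasSum.mul_antidiagonal_of_summable_norm {R : Type*} [NormedRing R] [CompleteSpace R]
    {f g : ℕ → R} {a b : R} (hf : HasSum f a) (hg : HasSum g b)
    (hf' : Summable fun n => ‖f n‖) (hg' : Summable fun n => ‖g n‖) :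
    HasSum (fun n => ∑ p ∈ antidiagonal n, f p.1 * g p.2) (a * b) := by
  rw [← hf.tsum_eq, ← hg.tsum_eq,
    tsum_mul_tsum_eq_tsum_sum_antidiagonal_of_summable_norm hf' hg']
  exact (summable_norm_sum_mul_antidiagonal_of_summable_norm hf' hg').of_norm.hasSum

theorem hasDerivAt_sum_antidiagonal_succ {𝕜 : Type*} [NontriviallyNormedField 𝕜]
    (a b : ℕ → 𝕜) (n : ℕ) :
    HasDerivAt (fun h => ∑ p ∈ antidiagonal (n + 1), a p.1 * b p.2 * h ^ p.2)
      (a n * b 1) 0 := by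
  refine (HasDerivAt.fun_sum fun (p : ℕ × ℕ) _ =>
    (hasDerivAt_pow p.2 (0 : 𝕜)).const_mul (a p.1 * b p.2)).congr_deriv ?_
  rw [sum_eq_single (n, 1)]
  · simp
  · rintro ⟨i, _ | _ | j⟩ hij hne
    · simp
    · exact absurd (by simpa using mem_antidiagonal.1 hij) hne
    · simp
  · simp

open Nat Real

section Appell

def HasAppellGenFun (A : ℕ → ℝ → ℝ) (G : ℝ → ℝ) (ℓ ε : ℝ) : Prop :=
  ∀ x t : ℝ, |t| < ε → HasSum (fun n => A n x * t ^ n / n !) (G t * exp (ℓ * x * t))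

variable {A : ℕ → ℝ → ℝ} {G : ℝ → ℝ} {ℓ ε : ℝ}

theorem HasAppellGenFun.div_factorial_add_eq_sum (hA : HasAppellGenFun A G ℓ ε) (hε : 0 < ε)
    (x h : ℝ) (N : ℕ) :
    A N (x + h) / N ! = ∑ p ∈ antidiagonal N, A p.1 x / p.1 ! * ((ℓ * h) ^ p.2 / p.2 !) := by
  have hcoeff : ∀ x t : ℝ, ‖t‖ < ε →
      HasSum (fun n => A n x / n ! * t ^ n) (G t * exp (ℓ * x * t)) := fun x t ht => by
    simpa only [mul_div_right_comm] using hA x t ht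
  refine congrFun (eq_of_hasSum_mul_pow (v := fun N =>
    ∑ p ∈ antidiagonal N, A p.1 x / p.1 ! * ((ℓ * h) ^ p.2 / p.2 !)) hε (hcoeff (x + h))
      fun t ht => ?_) N
  have hexp : HasSum (fun j => (ℓ * h * t) ^ j / j !) (exp (ℓ * h * t)) := by
    rw [exp_eq_exp_ℝ]
    exact NormedSpace.expSeries_div_hasSum_exp _
  have hprod := (hcoeff x t ht).mul_antidiagonal_of_summable_norm hexp
    (summable_norm_mul_pow_of_summable (fun t ht => (hcoeff x t ht).summable) ht)
    (NormedSpace.norm_expSeries_div_summable _)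
  convert hprod using 1
  · funext N
    rw [sum_mul]
    refine sum_congr rfl fun p hp => ?_
    rw [← mem_antidiagonal.1 hp]
    ring
  · rw [mul_assoc (G t), ← exp_add]
    congr 2
    ring

theorem HasAppellGenFun.hasDerivAt_succ (hA : HasAppellGenFun A G ℓ ε) (hε : 0 < ε)
    (n : ℕ) (x : ℝ) :
    HasDerivAt (A (n + 1)) ((n + 1) * ℓ * A n x) x := by
  have hpoly : A (n + 1) = fun y => (n + 1)! *
      ∑ p ∈ antidiagonal (n + 1), A p.1 x / p.1 ! * (ℓ ^ p.2 / p.2 !) * (y - x) ^ p.2 := by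
    funext y
    have hadd := hA.div_factorial_add_eq_sum hε x (y - x) (n + 1)
    rw [add_sub_cancel, div_eq_iff (by positivity)] at hadd
    rw [hadd, mul_comm]
    refine congrArg _ (sum_congr rfl fun p _ => ?_)
    rw [mul_pow]
    ring
  have hderiv := ((hasDerivAt_sum_antidiagonal_succ (fun i => A i x / i !)
    (fun j => ℓ ^ j / j !) n).const_mul ((n + 1)! : ℝ))
  rw [← sub_self x] at hderiv
  rw [hpoly]
  refine (hderiv.comp_sub_const x x).congr_deriv ?_
  rw [factorial_succ, factorial_one]
  push_cast
  field_simp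

end Appell

theorem generalized_polyEuler_deriv_general
    (a b c : ℝ) (hc : 0 < c) (k : ℤ)
    (E : ℕ → ℝ → ℝ) (ε : ℝ) (hε : 0 < ε)
    (hE : ∀ x t : ℝ, |t| < ε →
      HasSum (fun n : ℕ => E n x * t ^ n / (n.factorial : ℝ))
        (2 * polyLog k (1 - (a * b) ^ (-t)) / (a ^ (-t) + b ^ t) * c ^ (x * t)))
    (n : ℕ) (x : ℝ) :
    HasDerivAt (fun y : ℝ => E (n + 1) y) (((n : ℝ) + 1) * Real.log c * E n x) x := by
  have hA : HasAppellGenFun E (fun t => 2 * polyLog k (1 - (a * b) ^ (-t)) / (a ^ (-t) + b ^ t))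
      (Real.log c) ε := fun x t ht => by
    simpa only [rpow_def_of_pos hc, ← mul_assoc] using hE x t ht
  exact hA.hasDerivAt_succ hε n x

/-- Theorem 3: `d/dx E_{n+1}^{(k)}(x;a,b,c) = (n+1)(ln c) E_n^{(k)}(x;a,b,c)`. -/
theorem generalized_polyEuler_deriv
    (a b c : ℝ) (ha : 0 < a) (hb : 0 < b) (hc : 0 < c) (k : ℤ)
    (E : ℕ → ℝ → ℝ) (ε : ℝ) (hε : 0 < ε)
    (hE : ∀ x t : ℝ, |t| < ε →
      HasSum (fun n : ℕ => E n x * t ^ n / (n.factorial : ℝ))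
        (2 * polyLog k (1 - (a * b) ^ (-t)) / (a ^ (-t) + b ^ t) * c ^ (x * t)))
    (n : ℕ) (x : ℝ) :
    HasDerivAt (fun y : ℝ => E (n + 1) y) (((n : ℝ) + 1) * Real.log c * E n x) x :=
  generalized_polyEuler_deriv_general a b c hc k E ε hε hE n x
end

section
/- The symmetrized poly-Euler polynomials D_n^{(m)}(x,y;a,b,c) have the double exponential generating function Σ_{n≥0} Σ_{m≥0} D_n^{(m)}(x,y;a,b,c) (t^n/n!)(u^m/m!) = 2 e^{Yu} e^{Xt} e^{t+u}(1-e^{-t}) / ((e^t+1)(e^t+e^u-e^{t+u})), where X = (x ln c + ln a)/(ln a + ln b) and Y = (y ln c + ln a)/(ln a + ln b). -/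
/-
Put `L = log a + log b` and `t = L s`. Then `(ab)^(-s) = e^(-t)`, and the generating function of
`E_n^(-k)` at `s` is `2 e^(Xt) / (e^t + 1) · Li_{-k}(1 - e^(-t))`. Summing against `u^k / k!` and
using `∑_k Li_{-k}(z) u^k / k! = ∑_{m ≥ 1} (z e^u)^m = z e^u / (1 - z e^u)` gives the double
generating function of the `E_n^(-k)`; `D` is its binomial convolution in `k` with `e^(Yu)`.

All rearrangements need absolute convergence, which comes from a bound uniform in `k`: the
generating function extends holomorphically to a complex disc independent of `k`, on which it is
bounded by `4 k!`, so Cauchy's estimate gives `|E_n^(-k)| ≤ 4 k! n! / R^n`.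
-/

/-- The negative-index polylogarithm `Li_{-k}(z) = ∑_{m ≥ 1} m^k z^m`. -/
noncomputable def polyLogNeg (k : ℕ) (z : ℝ) : ℝ :=
  ∑' m : ℕ, ((m : ℝ) + 1) ^ k * z ^ (m + 1)

open Filter Metric Topology Finset
open scoped Nat

theorem Real.hasSum_pow_div_factorial (x : ℝ) : HasSum (fun n => x ^ n / n !) (Real.exp x) :=
  Real.exp_eq_exp_ℝ ▸ NormedSpace.expSeries_div_hasSum_exp x

theorem HasSum.sum_antidiagonal_snd_mul {ι α : Type*} [TopologicalSpace α]
    [NonUnitalNonAssocSemiring α] [T3Space α] [IsTopologicalSemiring α]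
    {f : ι × ℕ → α} {g : ℕ → α} {a b : α} (hf : HasSum f a) (hg : HasSum g b)
    (hfg : Summable fun x : (ι × ℕ) × ℕ => f x.1 * g x.2) :
    HasSum (fun p : ι × ℕ => ∑ kl ∈ antidiagonal p.2, f (p.1, kl.1) * g kl.2) (a * b) := by
  let e : (Σ p : ι × ℕ, antidiagonal p.2) ≃ (ι × ℕ) × ℕ :=
    { toFun := fun x => ((x.1.1, x.2.1.1), x.2.1.2)
      invFun := fun y => ⟨(y.1.1, y.1.2 + y.2), (y.1.2, y.2), mem_antidiagonal.2 rfl⟩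
      left_inv := by
        rintro ⟨⟨i, m⟩, ⟨k, l⟩, h⟩
        obtain rfl : k + l = m := mem_antidiagonal.1 h
        rfl
      right_inv := fun _ => rfl }
  refine (e.hasSum_iff.2 (hf.mul hg hfg)).sigma fun p => ?_
  convert hasSum_fintype _
  exact (sum_coe_sort _ _).symm

theorem eq_of_eventually_hasSum_pow_smul {𝕜 E : Type*} [NontriviallyNormedField 𝕜]
    [NormedAddCommGroup E] [NormedSpace 𝕜 E] {a b : ℕ → E} {f : 𝕜 → E}
    (ha : ∀ᶠ z in 𝓝 0, HasSum (fun n => z ^ n • a n) (f z))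
    (hb : ∀ᶠ z in 𝓝 0, HasSum (fun n => z ^ n • b n) (f z)) : a = b := by
  let p : (ℕ → E) → FormalMultilinearSeries 𝕜 𝕜 E := fun c n =>
    ContinuousMultilinearMap.mkPiRing 𝕜 (Fin n) (c n)
  have hcoeff : ∀ c n, (p c).coeff n = c n := by simp [FormalMultilinearSeries.coeff, p]
  have hp : ∀ c, (∀ᶠ z in 𝓝 0, HasSum (fun n => z ^ n • c n) (f z)) →
      HasFPowerSeriesAt f (p c) 0 := fun c hc =>
    hasFPowerSeriesAt_iff.2 (by simpa only [hcoeff, zero_add] using hc)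
  funext n
  rw [← hcoeff a n, ← hcoeff b n, (hp a ha).eq_formalMultilinearSeries (hp b hb)]

theorem abs_coeff_le_of_differentiableOn_ball {d : ℕ → ℝ} {g : ℝ → ℝ} {F : ℂ → ℂ} {r M : ℝ}
    (hF : DifferentiableOn ℂ F (ball 0 r)) (hFM : ∀ ζ ∈ ball 0 r, ‖F ζ‖ ≤ M)
    (hFg : ∀ t : ℝ, F t = g t) (hd : ∀ᶠ t in 𝓝 0, HasSum (fun n => d n * t ^ n) (g t))
    {R : ℝ} (hR : 0 < R) (hRr : R < r) (n : ℕ) : |d n| ≤ M / R ^ n := by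
  have htaylor : ∀ᶠ t : ℝ in 𝓝 0,
      HasSum (fun n => t ^ n • ((n ! : ℂ)⁻¹ * iteratedDeriv n F 0)) (F t) := by
    filter_upwards [ball_mem_nhds (0 : ℝ) (hR.trans hRr)] with t ht
    refine (Complex.hasSum_taylorSeries_on_ball hF (z := t) (by simpa using ht)).congr_fun
      fun n => ?_
    simp only [sub_zero, smul_eq_mul, Complex.real_smul, Complex.ofReal_pow]
    ring
  have hreal : ∀ᶠ t : ℝ in 𝓝 0, HasSum (fun n => t ^ n • (d n : ℂ)) (F t) := by
    filter_upwards [hd] with t ht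
    rw [hFg]
    refine (Complex.hasSum_ofReal.2 ht).congr_fun fun n => ?_
    simp only [Complex.real_smul]; push_cast; ring
  have hcoeff := congrFun (eq_of_eventually_hasSum_pow_smul hreal htaylor) n
  have hcauchy := Complex.norm_iteratedDeriv_le_of_forall_mem_sphere_norm_le n hR
    (hF.diffContOnCl_ball (closedBall_subset_ball hRr))
    fun ζ hζ => hFM ζ (sphere_subset_closedBall.trans (closedBall_subset_ball hRr) hζ)
  calc |d n| = (n ! : ℝ)⁻¹ * ‖iteratedDeriv n F 0‖ := by
        rw [← Real.norm_eq_abs, ← Complex.norm_real, hcoeff, norm_mul, norm_inv,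
          Complex.norm_natCast]
    _ ≤ (n ! : ℝ)⁻¹ * (n ! * M / R ^ n) := by gcongr
    _ = M / R ^ n := by field_simp

theorem one_div_pow_mul_sum_choose_eq_sum_antidiagonal (e : ℕ → ℝ) {L : ℝ} (hL : L ≠ 0)
    (Y t u : ℝ) (n m : ℕ) :
    1 / L ^ n * (∑ k ∈ range (m + 1), (m.choose k : ℝ) * e k * Y ^ (m - k)) * t ^ n / n ! *
        u ^ m / m ! =
      ∑ kl ∈ antidiagonal m, e kl.1 * (t / L) ^ n / n ! * (u ^ kl.1 / kl.1 !) *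
        ((Y * u) ^ kl.2 / kl.2 !) := by
  rw [← Nat.sum_antidiagonal_eq_sum_range_succ (fun k j => (m.choose k : ℝ) * e k * Y ^ j),
    mul_sum, sum_mul, sum_div, sum_mul, sum_div]
  refine sum_congr rfl fun ⟨k, j⟩ hkj => ?_
  obtain rfl : k + j = m := mem_antidiagonal.1 hkj
  rw [Nat.cast_add_choose, div_pow]
  field_simp
  ring

theorem hasSum_polyLogNeg {z : ℝ} (k : ℕ) (hz : |z| < 1) :
    HasSum (fun m : ℕ => ((m : ℝ) + 1) ^ k * z ^ (m + 1)) (polyLogNeg k z) := by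
  have h := (summable_nat_add_iff (f := fun n : ℕ => (n : ℝ) ^ k * z ^ n) 1).2
    (summable_pow_mul_geometric_of_norm_lt_one k (show ‖z‖ < 1 from hz))
  simp only [Nat.cast_add, Nat.cast_one] at h
  exact h.hasSum

theorem hasSum_polyLogNeg_mul_pow_div_factorial {z u : ℝ} (hzu : |z| * Real.exp |u| < 1) :
    HasSum (fun k => polyLogNeg k z * (u ^ k / k !)) (z * Real.exp u / (1 - z * Real.exp u)) := by
  set f : ℕ × ℕ → ℝ := fun p => ((p.1 : ℝ) + 1) ^ p.2 * z ^ (p.1 + 1) * (u ^ p.2 / p.2 !)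
  have hexp : ∀ (m : ℕ) (v : ℝ), Real.exp (((m : ℝ) + 1) * v) = Real.exp v ^ (m + 1) := by
    intro m v
    rw [← Real.exp_nat_mul]; push_cast; ring_nf
  have hcol : ∀ m : ℕ, HasSum (fun k => f (m, k)) ((z * Real.exp u) ^ (m + 1)) := by
    intro m
    have h := (Real.hasSum_pow_div_factorial (((m : ℝ) + 1) * u)).mul_right (z ^ (m + 1))
    rw [hexp, ← mul_pow, mul_comm (Real.exp u)] at h
    exact h.congr_fun fun k => by simp only [f, mul_pow]; ring
  have hcolabs : ∀ m : ℕ, HasSum (fun k => |f (m, k)|) ((|z| * Real.exp |u|) ^ (m + 1)) := by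
    intro m
    have h := (Real.hasSum_pow_div_factorial (((m : ℝ) + 1) * |u|)).mul_right (|z| ^ (m + 1))
    rw [hexp, ← mul_pow, mul_comm (Real.exp |u|)] at h
    refine h.congr_fun fun k => ?_
    simp only [f, abs_mul, abs_div, abs_pow, Nat.abs_cast, mul_pow]
    rw [abs_of_nonneg (by positivity : (0 : ℝ) ≤ m + 1)]; ring
  have hf : Summable fun p => |f p| := by
    refine (summable_prod_of_nonneg fun _ => abs_nonneg _).2 ⟨fun m => (hcolabs m).summable, ?_⟩
    simp only [fun m => (hcolabs m).tsum_eq]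
    exact (summable_nat_add_iff 1).2 (summable_geometric_of_lt_one (by positivity) hzu)
  have hξ : |z * Real.exp u| < 1 := by
    rw [abs_mul, Real.abs_exp]
    exact lt_of_le_of_lt (by gcongr; exact le_abs_self u) hzu
  have hgeom : HasSum (fun m => (z * Real.exp u) ^ (m + 1))
      (z * Real.exp u / (1 - z * Real.exp u)) := by
    simpa only [_root_.pow_succ', div_eq_mul_inv] using
      (hasSum_geometric_of_abs_lt_one hξ).mul_left _
  have hsum : HasSum f (z * Real.exp u / (1 - z * Real.exp u)) := by
    have := (summable_abs_iff.1 hf).hasSum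
    rwa [(this.prod_fiberwise hcol).unique hgeom] at this
  have hz : |z| < 1 := lt_of_le_of_lt (le_mul_of_one_le_right (abs_nonneg z)
    (Real.one_le_exp (abs_nonneg u))) hzu
  exact ((Equiv.prodComm ℕ ℕ).hasSum_iff.2 hsum).prod_fiberwise fun k =>
    (hasSum_polyLogNeg k hz).mul_right _

noncomputable def cpolyLogNeg (k : ℕ) (w : ℂ) : ℂ :=
  ∑' m : ℕ, ((m : ℂ) + 1) ^ k * w ^ (m + 1)

theorem cpolyLogNeg_ofReal (k : ℕ) (z : ℝ) : cpolyLogNeg k z = polyLogNeg k z := by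
  simp [cpolyLogNeg, polyLogNeg, Complex.ofReal_tsum]

theorem norm_cpolyLogNeg_term_le (k m : ℕ) {w : ℂ} (hw : ‖w‖ ≤ 1 / 6) :
    ‖((m : ℂ) + 1) ^ k * w ^ (m + 1)‖ ≤ k ! / 2 / 2 ^ m := by
  have hpow : ((m : ℝ) + 1) ^ k ≤ 3 ^ (m + 1) * k ! :=
    calc ((m : ℝ) + 1) ^ k ≤ Real.exp ((m : ℝ) + 1) * k ! :=
          (div_le_iff₀ (by positivity)).1
            (Real.pow_div_factorial_le_exp (x := (m : ℝ) + 1) (by positivity) k)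
      _ ≤ 3 ^ (m + 1) * k ! := by
          rw [← Nat.cast_succ, ← Real.exp_one_pow]
          gcongr
          exact Real.exp_one_lt_three.le
  calc ‖((m : ℂ) + 1) ^ k * w ^ (m + 1)‖ = ((m : ℝ) + 1) ^ k * ‖w‖ ^ (m + 1) := by
        rw [norm_mul, norm_pow, norm_pow]; norm_cast
    _ ≤ 3 ^ (m + 1) * k ! * (1 / 6) ^ (m + 1) := by gcongr
    _ = k ! / 2 / 2 ^ m := by
        rw [mul_right_comm, ← mul_pow, div_div, ← pow_succ']; norm_num [div_pow]; ring

theorem norm_cpolyLogNeg_le (k : ℕ) {w : ℂ} (hw : ‖w‖ ≤ 1 / 6) : ‖cpolyLogNeg k w‖ ≤ k ! :=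
  tsum_of_norm_bounded (hasSum_geometric_two' _) fun m => norm_cpolyLogNeg_term_le k m hw

theorem differentiableOn_cpolyLogNeg (k : ℕ) :
    DifferentiableOn ℂ (cpolyLogNeg k) (ball 0 (1 / 6)) :=
  Complex.differentiableOn_tsum_of_summable_norm (hasSum_geometric_two' _).summable
    (fun m => (differentiable_const _ |>.mul (differentiable_id.pow _)).differentiableOn)
    isOpen_ball fun m w hw =>
      norm_cpolyLogNeg_term_le k m (by simpa using (mem_ball_zero_iff.1 hw).le)

section GenFun

variable (a b c : ℝ)

noncomputable def polyEulerGenFun (k : ℕ) (x t : ℝ) : ℝ :=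
  2 * polyLogNeg k (1 - (a * b) ^ (-t)) / (a ^ (-t) + b ^ t) * c ^ (x * t)

noncomputable def cpolyEulerGenFun (k : ℕ) (x : ℝ) (ζ : ℂ) : ℂ :=
  2 * cpolyLogNeg k (1 - ((a * b : ℝ) : ℂ) ^ (-ζ)) / ((a : ℂ) ^ (-ζ) + (b : ℂ) ^ ζ) *
    (c : ℂ) ^ ((x : ℂ) * ζ)

variable {a b c}

theorem cpolyEulerGenFun_ofReal (ha : 0 < a) (hb : 0 < b) (hc : 0 < c) (k : ℕ) (x t : ℝ) :
    cpolyEulerGenFun a b c k x t = polyEulerGenFun a b c k x t := by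
  simp only [cpolyEulerGenFun, polyEulerGenFun]
  push_cast [← cpolyLogNeg_ofReal, Complex.ofReal_cpow ha.le, Complex.ofReal_cpow hb.le,
    Complex.ofReal_cpow hc.le, Complex.ofReal_cpow (mul_pos ha hb).le]
  rfl

theorem exists_forall_differentiableOn_cpolyEulerGenFun (ha : 0 < a) (hb : 0 < b) (hc : 0 < c)
    (x : ℝ) : ∃ r > 0, ∀ k, DifferentiableOn ℂ (cpolyEulerGenFun a b c k x) (ball 0 r) ∧
      ∀ ζ ∈ ball 0 r, ‖cpolyEulerGenFun a b c k x ζ‖ ≤ 4 * k ! := by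
  have hw : Differentiable ℂ fun ζ : ℂ => 1 - ((a * b : ℝ) : ℂ) ^ (-ζ) :=
    (differentiable_neg.const_cpow (Or.inl (by exact_mod_cast (mul_pos ha hb).ne'))).const_sub _
  have hd : Differentiable ℂ fun ζ : ℂ => (a : ℂ) ^ (-ζ) + (b : ℂ) ^ ζ :=
    (differentiable_neg.const_cpow (Or.inl (by exact_mod_cast ha.ne'))).add
      (differentiable_id.const_cpow (Or.inl (by exact_mod_cast hb.ne')))
  have he : Differentiable ℂ fun ζ : ℂ => (c : ℂ) ^ ((x : ℂ) * ζ) :=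
    (differentiable_id.const_mul _).const_cpow (Or.inl (by exact_mod_cast hc.ne'))
  have hev : ∀ᶠ ζ in 𝓝 (0 : ℂ), ‖1 - ((a * b : ℝ) : ℂ) ^ (-ζ)‖ < 1 / 6 ∧
      1 < ‖(a : ℂ) ^ (-ζ) + (b : ℂ) ^ ζ‖ ∧ ‖(c : ℂ) ^ ((x : ℂ) * ζ)‖ < 2 := by
    refine (hw.continuous.norm.continuousAt.eventually_lt continuousAt_const ?_).and
      ((continuousAt_const.eventually_lt hd.continuous.norm.continuousAt ?_).and
        (he.continuous.norm.continuousAt.eventually_lt continuousAt_const ?_)) <;> norm_num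
  obtain ⟨r, hr, hball⟩ := eventually_nhds_iff_ball.1 hev
  refine ⟨r, hr, fun k => ⟨?_, fun ζ hζ => ?_⟩⟩
  · refine ((((differentiableOn_cpolyLogNeg k).comp hw.differentiableOn fun ζ hζ => ?_).const_mul
      2).div hd.differentiableOn fun ζ hζ => ?_).mul he.differentiableOn
    · exact mem_ball_zero_iff.2 (hball ζ hζ).1
    · exact norm_pos_iff.1 (one_pos.trans (hball ζ hζ).2.1)
  · obtain ⟨h1, h2, h3⟩ := hball ζ hζ
    have hLi := norm_cpolyLogNeg_le k h1.le
    simp only [cpolyEulerGenFun, norm_mul, norm_div, Complex.norm_ofNat]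
    calc 2 * ‖cpolyLogNeg k _‖ / ‖(a : ℂ) ^ (-ζ) + (b : ℂ) ^ ζ‖ * ‖(c : ℂ) ^ ((x : ℂ) * ζ)‖
        ≤ 2 * k ! / 1 * 2 := by gcongr
      _ = 4 * k ! := by ring

theorem exists_abs_coeff_polyEulerGenFun_le (ha : 0 < a) (hb : 0 < b) (hc : 0 < c) {x ε : ℝ}
    (hε : 0 < ε) {e : ℕ → ℕ → ℝ}
    (he : ∀ k t, |t| < ε → HasSum (fun n => e k n * t ^ n / n !) (polyEulerGenFun a b c k x t)) :
    ∃ R > 0, ∀ k n, |e k n| ≤ 4 * k ! * n ! / R ^ n := by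
  obtain ⟨r, hr, hF⟩ := exists_forall_differentiableOn_cpolyEulerGenFun ha hb hc x
  refine ⟨r / 2, by positivity, fun k n => ?_⟩
  have hcoeff : |e k n / n !| ≤ 4 * k ! / (r / 2) ^ n := by
    refine abs_coeff_le_of_differentiableOn_ball (d := fun n => e k n / n !) (hF k).1 (hF k).2
      (cpolyEulerGenFun_ofReal ha hb hc k x) ?_ (half_pos hr) (half_lt_self hr) n
    filter_upwards [ball_mem_nhds (0 : ℝ) hε] with t ht
    exact (he k t (by simpa using ht)).congr_fun fun n => by ring
  rwa [abs_div, Nat.abs_cast, div_le_iff₀ (by positivity), div_mul_eq_mul_div] at hcoeff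

theorem hasSum_polyEuler_double {x ε C R : ℝ} {e : ℕ → ℕ → ℝ}
    (he : ∀ k t, |t| < ε → HasSum (fun n => e k n * t ^ n / n !) (polyEulerGenFun a b c k x t))
    (hbound : ∀ k n, |e k n| ≤ C * k ! * n ! / R ^ n) {s u : ℝ} (hsε : |s| < ε) (hsR : |s| < R)
    (hu : |u| < 1) (hz : |1 - (a * b) ^ (-s)| * Real.exp |u| < 1) :
    HasSum (fun p : ℕ × ℕ => e p.2 p.1 * s ^ p.1 / p.1 ! * (u ^ p.2 / p.2 !))
      (2 / (a ^ (-s) + b ^ s) * c ^ (x * s) *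
        ((1 - (a * b) ^ (-s)) * Real.exp u / (1 - (1 - (a * b) ^ (-s)) * Real.exp u))) := by
  set z := 1 - (a * b) ^ (-s)
  have hR : 0 < R := (abs_nonneg s).trans_lt hsR
  have hrow : ∀ k, HasSum (fun n => e k n * s ^ n / n ! * (u ^ k / k !))
      (2 / (a ^ (-s) + b ^ s) * c ^ (x * s) * (polyLogNeg k z * (u ^ k / k !))) := by
    intro k
    have h := (he k s hsε).mul_right (u ^ k / k !)
    rwa [polyEulerGenFun, show 2 * polyLogNeg k z / (a ^ (-s) + b ^ s) * c ^ (x * s) * (u ^ k / k !)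
      = 2 / (a ^ (-s) + b ^ s) * c ^ (x * s) * (polyLogNeg k z * (u ^ k / k !)) by ring] at h
  have hterm : ∀ p : ℕ × ℕ, |e p.2 p.1 * s ^ p.1 / p.1 ! * (u ^ p.2 / p.2 !)| ≤
      C * ((|s| / R) ^ p.1 * |u| ^ p.2) := by
    rintro ⟨n, k⟩
    rw [abs_mul, abs_div, abs_div, abs_mul, abs_pow, abs_pow, Nat.abs_cast, Nat.abs_cast]
    calc |e k n| * |s| ^ n / n ! * (|u| ^ k / k !)
        ≤ C * k ! * n ! / R ^ n * |s| ^ n / n ! * (|u| ^ k / k !) := by gcongr; exact hbound k n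
      _ = C * ((|s| / R) ^ n * |u| ^ k) := by rw [div_pow]; field_simp
  have hsum : Summable fun p : ℕ × ℕ => |e p.2 p.1 * s ^ p.1 / p.1 ! * (u ^ p.2 / p.2 !)| :=
    .of_nonneg_of_le (fun _ => abs_nonneg _) hterm <| Summable.mul_left C <|
      (summable_geometric_of_lt_one (by positivity) ((div_lt_one hR).2 hsR)).mul_of_nonneg
        (summable_geometric_of_lt_one (abs_nonneg u) hu) (fun _ => by positivity)
        fun _ => by positivity
  have h := (summable_abs_iff.1 hsum).hasSum
  have htotal := (hasSum_polyLogNeg_mul_pow_div_factorial hz).mul_left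
    (2 / (a ^ (-s) + b ^ s) * c ^ (x * s))
  rwa [(((Equiv.prodComm ℕ ℕ).hasSum_iff.2 h).prod_fiberwise hrow).unique htotal] at h

theorem polyEuler_closed_form (ha : 0 < a) (hb : 0 < b) (hc : 0 < c)
    (hL : Real.log a + Real.log b ≠ 0) (x Y : ℝ) {s t : ℝ} (hst : (Real.log a + Real.log b) * s = t)
    (u : ℝ) (hzu : (1 - (a * b) ^ (-s)) * Real.exp u ≠ 1) :
    2 / (a ^ (-s) + b ^ s) * c ^ (x * s) *
        ((1 - (a * b) ^ (-s)) * Real.exp u / (1 - (1 - (a * b) ^ (-s)) * Real.exp u)) *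
        Real.exp (Y * u) =
      2 * Real.exp (Y * u) *
        Real.exp ((x * Real.log c + Real.log a) / (Real.log a + Real.log b) * t) *
        Real.exp (t + u) * (1 - Real.exp (-t)) /
        ((Real.exp t + 1) * (Real.exp t + Real.exp u - Real.exp (t + u))) := by
  have hXt : (x * Real.log c + Real.log a) / (Real.log a + Real.log b) * t =
      Real.log c * (x * s) + Real.log a * s := by
    rw [← hst]; field_simp
  rw [hXt, ← hst, add_mul]
  rw [Real.rpow_def_of_pos ha, Real.rpow_def_of_pos hb, Real.rpow_def_of_pos hc,
    Real.rpow_def_of_pos (mul_pos ha hb), Real.log_mul ha.ne' hb.ne'] at *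
  simp only [Real.exp_add, Real.exp_neg, mul_neg, add_mul] at *
  have hα := Real.exp_pos (Real.log a * s)
  have hβ := Real.exp_pos (Real.log b * s)
  generalize Real.exp (Real.log a * s) = α at *
  generalize Real.exp (Real.log b * s) = β at *
  have hden : α * β - α * β * Real.exp u + Real.exp u ≠ 0 := by
    contrapose! hzu
    field_simp
    linarith
  field_simp
  ring

end GenFun

/-- Theorem 4: double exponential generating function of the symmetrized
poly-Euler polynomials `D_n^{(m)}(x,y;a,b,c)`. -/
theorem symmetrized_polyEuler_double_gen_fun
    (a b c : ℝ) (ha : 0 < a) (hb : 0 < b) (hab : a * b ≠ 1) (hc : 0 < c)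
    (E : ℕ → ℕ → ℝ → ℝ) (ε : ℝ) (hε : 0 < ε)
    (hE : ∀ k : ℕ, ∀ x t : ℝ, |t| < ε →
      HasSum (fun n : ℕ => E k n x * t ^ n / (n.factorial : ℝ))
        (2 * polyLogNeg k (1 - (a * b) ^ (-t)) / (a ^ (-t) + b ^ t) * c ^ (x * t)))
    (x y : ℝ)
    -- the symmetrized polynomials
    (D : ℕ → ℕ → ℝ)
    (hD : ∀ n m : ℕ, D n m = (1 / (Real.log a + Real.log b) ^ n) *
      ∑ k ∈ Finset.range (m + 1), (m.choose k : ℝ) * E k n x *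
        ((y * Real.log c + Real.log a) / (Real.log a + Real.log b)) ^ (m - k)) :
    ∃ δ > 0, ∀ t u : ℝ, |t| < δ → |u| < δ →
      HasSum (fun p : ℕ × ℕ =>
          D p.1 p.2 * t ^ p.1 / (p.1.factorial : ℝ) * u ^ p.2 / (p.2.factorial : ℝ))
        (2 * Real.exp ((y * Real.log c + Real.log a) / (Real.log a + Real.log b) * u) *
           Real.exp ((x * Real.log c + Real.log a) / (Real.log a + Real.log b) * t) *
           Real.exp (t + u) * (1 - Real.exp (-t)) /
          ((Real.exp t + 1) * (Real.exp t + Real.exp u - Real.exp (t + u)))) := by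
  have hL : Real.log a + Real.log b ≠ 0 := by
    rw [← Real.log_mul ha.ne' hb.ne']
    exact Real.log_ne_zero_of_pos_of_ne_one (mul_pos ha hb) hab
  set L := Real.log a + Real.log b
  obtain ⟨R, hR, hbound⟩ := exists_abs_coeff_polyEulerGenFun_le ha hb hc hε fun k t => hE k x t
  have hsmall : ∀ᶠ p : ℝ × ℝ in 𝓝 0, |p.1 / L| < ε ∧ |p.1 / L| < R ∧ |p.2| < 1 ∧
      |1 - (a * b) ^ (-(p.1 / L))| * Real.exp |p.2| < 1 := by
    have hrpow : Continuous fun p : ℝ × ℝ => (a * b) ^ (-(p.1 / L)) :=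
      continuous_const.rpow (by fun_prop) fun _ => Or.inl (mul_pos ha hb).ne'
    refine (ContinuousAt.eventually_lt (by fun_prop) continuousAt_const ?_).and <|
      (ContinuousAt.eventually_lt (by fun_prop) continuousAt_const ?_).and <|
      (ContinuousAt.eventually_lt (by fun_prop) continuousAt_const ?_).and <|
      ContinuousAt.eventually_lt (by fun_prop) continuousAt_const ?_ <;> simp [hε, hR]
  obtain ⟨δ, hδ, hball⟩ := eventually_nhds_iff_ball.1 hsmall
  refine ⟨δ, hδ, fun t u ht hu => ?_⟩
  obtain ⟨hsε, hsR, hu1, hz⟩ := hball (t, u) (by simpa [Prod.dist_eq] using max_lt ht hu)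
  have hA := hasSum_polyEuler_double (fun k t => hE k x t) hbound hsε hsR hu1 hz
  have hB := Real.hasSum_pow_div_factorial ((y * Real.log c + Real.log a) / L * u)
  have hAB := hA.sum_antidiagonal_snd_mul hB
    (summable_mul_of_summable_norm hA.summable.norm hB.summable.norm)
  have hzu : (1 - (a * b) ^ (-(t / L))) * Real.exp u ≠ 1 :=
    ((mul_le_mul (le_abs_self _) (Real.exp_le_exp.2 (le_abs_self u)) (Real.exp_pos u).le
      (abs_nonneg _)).trans_lt hz).ne
  rw [polyEuler_closed_form ha hb hc hL x _ (mul_div_cancel₀ t hL) u hzu] at hAB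
  exact hAB.congr_fun fun p => by
    rw [hD, one_div_pow_mul_sum_choose_eq_sum_antidiagonal (fun k => E k p.1 x) hL]
end

section
/- The generalized multi poly-Euler polynomials satisfy the addition formula E_n^{(k_1,…,k_r)}(x+y; a, b, c) = Σ_{i=0}^{n} C(n,i) (r ln c)^{n-i} E_i^{(k_1,…,k_r)}(x; a, b, c) y^{n-i}. -/
/-!
Up to the factor `c ^ (r x t)`, the generating function does not depend on `x`, and
`c ^ (r (x + y) t) = c ^ (r x t) · exp ((r log c · y) t)`. So the generating function at `x + y` is
the product of the one at `x` with an exponential series, and the addition formula is the binomial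
convolution of the two coefficient sequences, read off by uniqueness of power series coefficients.
-/

/-- The multiple polylogarithm
`Li_{(k_1,…,k_r)}(z) = ∑_{1 ≤ m_1 ≤ … ≤ m_r} z^{m_r}/(m_1^{k_1} ⋯ m_r^{k_r})`. -/
noncomputable def multiPolyLog (r : ℕ) (hr : 0 < r) (k : Fin r → ℤ) (z : ℝ) : ℝ :=
  ∑' f : {f : Fin r → ℕ // Monotone f ∧ 0 < f ⟨0, hr⟩},
    z ^ (f.1 ⟨r - 1, Nat.sub_lt hr Nat.one_pos⟩) / ∏ i, ((f.1 i : ℝ)) ^ (k i)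

open Nat Finset

lemma hasFPowerSeriesAt_ofScalars_of_hasSum {a : ℕ → ℝ} {f : ℝ → ℝ} {ε : ℝ} (hε : 0 < ε)
    (ha : ∀ t : ℝ, |t| < ε → HasSum (fun n ↦ a n * t ^ n) (f t)) :
    HasFPowerSeriesAt f (FormalMultilinearSeries.ofScalars ℝ a) 0 := by
  have hε2 : 0 < ε / 2 := half_pos hε
  refine ⟨ENNReal.ofReal (ε / 2), ?_, ENNReal.ofReal_pos.mpr hε2, fun {t} ht ↦ ?_⟩
  · have hsum : Summable fun n ↦ ‖FormalMultilinearSeries.ofScalars ℝ a n‖ * (ε / 2) ^ n := by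
      refine (ha (ε / 2) (by rw [abs_of_pos hε2]; linarith)).summable.abs.congr fun n ↦ ?_
      rw [FormalMultilinearSeries.ofScalars_norm, Real.norm_eq_abs, abs_mul, abs_pow,
        abs_of_pos hε2]
    have := FormalMultilinearSeries.le_radius_of_summable (r := ⟨ε / 2, hε2.le⟩) _ hsum
    rwa [ENNReal.ofReal, Real.toNNReal_of_nonneg hε2.le]
  · have ht' : |t| < ε / 2 := by
      rw [Metric.mem_eball, edist_dist, ENNReal.ofReal_lt_ofReal_iff hε2, Real.dist_eq,
        sub_zero] at ht
      exact ht
    simpa only [zero_add, FormalMultilinearSeries.ofScalars_apply_eq, smul_eq_mul]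
      using ha t (by linarith)

lemma eq_of_forall_hasSum_mul_pow {a b : ℕ → ℝ} {f : ℝ → ℝ} {ε : ℝ} (hε : 0 < ε)
    (ha : ∀ t : ℝ, |t| < ε → HasSum (fun n ↦ a n * t ^ n) (f t))
    (hb : ∀ t : ℝ, |t| < ε → HasSum (fun n ↦ b n * t ^ n) (f t)) : a = b :=
  (FormalMultilinearSeries.ofScalars_series_eq_iff ℝ a b).mp
    ((hasFPowerSeriesAt_ofScalars_of_hasSum hε ha).eq_formalMultilinearSeries
      (hasFPowerSeriesAt_ofScalars_of_hasSum hε hb))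

lemma eq_of_forall_hasSum_egf {u v : ℕ → ℝ} {f : ℝ → ℝ} {ε : ℝ} (hε : 0 < ε)
    (hu : ∀ t : ℝ, |t| < ε → HasSum (fun n ↦ u n * t ^ n / n !) (f t))
    (hv : ∀ t : ℝ, |t| < ε → HasSum (fun n ↦ v n * t ^ n / n !) (f t)) : u = v := by
  have hdiv : (fun n ↦ u n / n !) = fun n ↦ v n / n ! := by
    refine eq_of_forall_hasSum_mul_pow (f := f) hε (fun t ht ↦ ?_) (fun t ht ↦ ?_)
    · exact (hu t ht).congr_fun fun n ↦ by ring
    · exact (hv t ht).congr_fun fun n ↦ by ring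
  funext n
  have hfac : (n ! : ℝ) ≠ 0 := by positivity
  exact (div_left_inj' hfac).mp (congrFun hdiv n)

lemma choose_mul_pow_div_factorial {n i : ℕ} (hi : i ≤ n) (p q t : ℝ) :
    p * t ^ i / i ! * (q * t ^ (n - i) / (n - i)!) = n.choose i * p * q * t ^ n / n ! := by
  have hfac : (n.choose i : ℝ) * i ! * (n - i)! = n ! := by
    exact_mod_cast Nat.choose_mul_factorial_mul_factorial hi
  have htn : t ^ n = t ^ i * t ^ (n - i) := by rw [← pow_add, Nat.add_sub_cancel' hi]
  have hchoose : (n.choose i : ℝ) ≠ 0 := Nat.cast_ne_zero.mpr (Nat.choose_pos hi).ne'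
  rw [← hfac, htn]
  field_simp

lemma HasSum.egf_mul {u v : ℕ → ℝ} {t F G : ℝ}
    (hu : HasSum (fun n ↦ u n * t ^ n / n !) F) (hv : HasSum (fun n ↦ v n * t ^ n / n !) G) :
    HasSum (fun n ↦ (∑ i ∈ range (n + 1), n.choose i * u i * v (n - i)) * t ^ n / n !)
      (F * G) := by
  have hprod := hasSum_sum_range_mul_of_summable_norm (f := fun n ↦ u n * t ^ n / n !)
    (g := fun n ↦ v n * t ^ n / n !) (by simpa only [Real.norm_eq_abs] using hu.summable.abs)
    (by simpa only [Real.norm_eq_abs] using hv.summable.abs)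
  rw [hu.tsum_eq, hv.tsum_eq] at hprod
  refine hprod.congr_fun fun n ↦ ?_
  rw [sum_mul, sum_div]
  exact sum_congr rfl fun i hi ↦
    (choose_mul_pow_div_factorial (Nat.lt_succ_iff.mp (mem_range.mp hi)) _ _ _).symm

lemma hasSum_exp_mul (s t : ℝ) : HasSum (fun n ↦ s ^ n * t ^ n / n !) (Real.exp (s * t)) := by
  simpa only [Real.exp_eq_exp_ℝ, mul_pow] using NormedSpace.expSeries_div_hasSum_exp (s * t)

lemma rpow_mul_add_eq_mul_exp {c : ℝ} (hc : 0 < c) (r x y t : ℝ) :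
    c ^ (r * (x + y) * t) = c ^ (r * x * t) * Real.exp (r * Real.log c * y * t) := by
  rw [show r * (x + y) * t = r * x * t + r * y * t by ring, Real.rpow_add hc,
    Real.rpow_def_of_pos hc (r * y * t)]
  ring_nf

theorem multi_polyEuler_addition_general
    (r : ℕ) (hr : 0 < r) (k : Fin r → ℤ)
    (a b c : ℝ) (hc : 0 < c)
    (E : ℕ → ℝ → ℝ) (ε : ℝ) (hε : 0 < ε)
    (hE : ∀ x t : ℝ, |t| < ε →
      HasSum (fun n : ℕ => E n x * t ^ n / (n.factorial : ℝ))
        (2 * multiPolyLog r hr k (1 - (a * b) ^ (-t)) / (a ^ (-t) + b ^ t) ^ r *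
          c ^ ((r : ℝ) * x * t)))
    (n : ℕ) (x y : ℝ) :
    E n (x + y) = ∑ i ∈ Finset.range (n + 1),
      (n.choose i : ℝ) * ((r : ℝ) * Real.log c) ^ (n - i) * E i x * y ^ (n - i) := by
  have hcoeffs := eq_of_forall_hasSum_egf hε (hE (x + y)) fun t ht ↦ by
    rw [rpow_mul_add_eq_mul_exp hc, ← mul_assoc]
    exact (hE x t ht).egf_mul (hasSum_exp_mul _ t)
  rw [congrFun hcoeffs n]
  refine sum_congr rfl fun i _ ↦ ?_
  rw [mul_pow]
  ring

/-- Addition formula: `E_n^{(k⃗)}(x+y;a,b,c)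
  = ∑_{i=0}^n C(n,i) (r ln c)^{n-i} E_i^{(k⃗)}(x;a,b,c) y^{n-i}`. -/
theorem multi_polyEuler_addition
    (r : ℕ) (hr : 0 < r) (k : Fin r → ℤ)
    (a b c : ℝ) (ha : 0 < a) (hb : 0 < b) (hc : 0 < c)
    (E : ℕ → ℝ → ℝ) (ε : ℝ) (hε : 0 < ε)
    (hE : ∀ x t : ℝ, |t| < ε →
      HasSum (fun n : ℕ => E n x * t ^ n / (n.factorial : ℝ))
        (2 * multiPolyLog r hr k (1 - (a * b) ^ (-t)) / (a ^ (-t) + b ^ t) ^ r *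
          c ^ ((r : ℝ) * x * t)))
    (n : ℕ) (x y : ℝ) :
    E n (x + y) = ∑ i ∈ Finset.range (n + 1),
      (n.choose i : ℝ) * ((r : ℝ) * Real.log c) ^ (n - i) * E i x * y ^ (n - i) :=
  multi_polyEuler_addition_general r hr k a b c hc E ε hε hE n x y
end
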